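/- arXiv:2305.19450 — 6 statements merged into one kernel-verified Lean document; each statement's English description precedes it below -/
import Mathlib

section
/- Let f : ℝⁿ → ℝ be Lipschitz continuous with constant L₀. For β > 0 define the Gaussian smoothing f^β(x) = E_u[f(x + βu)], where u ~ N(0, Iₙ). Then for any β₁, β₂ ≥ 0 and any x ∈ ℝⁿ, |f^{β₁}(x) − f^{β₂}(x)| ≤ L₀ |β₁ − β₂| √n. -/
open MeasureTheory

theorem gaussian_smoothing_lipschitz_in_beta {n : ℕ}
    (μ : Measure (EuclideanSpace ℝ (Fin n))) [IsProbabilityMeasure μ]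
    (f : EuclideanSpace ℝ (Fin n) → ℝ) (L₀ : ℝ) (hL : 0 ≤ L₀)
    (hf : ∀ a b, |f a - f b| ≤ L₀ * ‖a - b‖)
    (hu : Integrable (fun u => ‖u‖) μ)
    (hmom : ∫ u, ‖u‖ ∂μ ≤ Real.sqrt n)
    (hint : ∀ (β : ℝ) (x : EuclideanSpace ℝ (Fin n)),
      Integrable (fun u => f (x + β • u)) μ)
    (β₁ β₂ : ℝ) (hβ₁ : 0 ≤ β₁) (hβ₂ : 0 ≤ β₂) (x : EuclideanSpace ℝ (Fin n)) :
    |(∫ u, f (x + β₁ • u) ∂μ) - ∫ u, f (x + β₂ • u) ∂μ|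
      ≤ L₀ * |β₁ - β₂| * Real.sqrt n := by
  have h1 := hint β₁ x
  have h2 := hint β₂ x
  rw [← integral_sub h1 h2]
  calc |∫ u, (f (x + β₁ • u) - f (x + β₂ • u)) ∂μ|
      ≤ ∫ u, |f (x + β₁ • u) - f (x + β₂ • u)| ∂μ :=
        by simpa using norm_integral_le_integral_norm (μ := μ) (fun u => f (x + β₁ • u) - f (x + β₂ • u))
    _ ≤ ∫ u, L₀ * |β₁ - β₂| * ‖u‖ ∂μ := by
        apply integral_mono_of_nonneg
        · filter_upwards with u using abs_nonneg _
        · exact (hu.const_mul _)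
        · filter_upwards with u
          calc |f (x + β₁ • u) - f (x + β₂ • u)|
              ≤ L₀ * ‖(x + β₁ • u) - (x + β₂ • u)‖ := hf _ _
            _ = L₀ * |β₁ - β₂| * ‖u‖ := by
                rw [show (x + β₁ • u) - (x + β₂ • u) = (β₁ - β₂) • u by
                  module]
                rw [norm_smul, Real.norm_eq_abs, mul_assoc]
    _ = L₀ * |β₁ - β₂| * ∫ u, ‖u‖ ∂μ := integral_const_mul _ _
    _ ≤ L₀ * |β₁ - β₂| * Real.sqrt n := by
        apply mul_le_mul_of_nonneg_left hmom
        positivity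
end

section
/- Let 0 < α₂ < 1, s ∈ (0,1), and set s₂ᵏ = s/(k+1)^{α₂}. For every integer k ≥ 1 satisfying k/(k+1)^{α₂} ≥ (ln s + (1+α₂) ln k)/s, one has ∑_{r=0}^{k−1} (s₂ʳ)² ∏_{t=r}^{k−1} (1 − s₂^{t+1})² ≤ 9 s / k^{α₂}. -/
/-! Every factor of the product is at most `1 - c` with `c = s / (k + 1) ^ α₂`, so the `r`-th term
is at most `(s / (r + 1) ^ α₂) ^ 2 * (1 - c) ^ (2 * (k - r))`. For `r < k / 2` the exponent is at
least `k`, and `(1 - c) ^ k ≤ exp (-k c) ≤ 1 / (s k ^ (1 + α₂))` by the hypothesis on `k`, so these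
terms contribute at most `s / k ^ α₂`. For `r ≥ k / 2` the step size is at most `2 s / k ^ α₂`,
and the geometric series `∑ (1 - c) ^ (k - r) ≤ 1 / c` bounds their contribution by
`8 s / k ^ α₂`, using `(k + 1) ^ α₂ ≤ 2 k ^ α₂`. -/

open Finset Real

lemma one_sub_pow_le_exp_neg_mul {c : ℝ} (hc : c ≤ 1) (n : ℕ) :
    (1 - c) ^ n ≤ exp (-(n * c)) := by
  calc (1 - c) ^ n ≤ exp (-c) ^ n := pow_le_pow_left₀ (by linarith) (one_sub_le_exp_neg c) n
    _ = exp (-(n * c)) := by rw [← exp_nat_mul, mul_neg]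

lemma natCast_mul_sq_mul_one_sub_pow_le {s α c : ℝ} {k : ℕ} (hs : 0 < s) (hk : (0 : ℝ) < k)
    (hc : c ≤ 1) (h : log s + (1 + α) * log k ≤ k * c) :
    k * s ^ 2 * (1 - c) ^ k ≤ s / (k : ℝ) ^ α := by
  have hlog : log (s * (k : ℝ) ^ (1 + α)) = log s + (1 + α) * log k := by
    rw [log_mul hs.ne' (rpow_pos_of_pos hk _).ne', log_rpow hk]
  have hpow : (1 - c) ^ k ≤ (s * (k : ℝ) ^ (1 + α))⁻¹ := by
    calc (1 - c) ^ k ≤ exp (-(k * c)) := one_sub_pow_le_exp_neg_mul hc k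
      _ ≤ exp (-log (s * (k : ℝ) ^ (1 + α))) := exp_le_exp.2 (by linarith)
      _ = (s * (k : ℝ) ^ (1 + α))⁻¹ := by rw [exp_neg, exp_log (by positivity)]
  calc k * s ^ 2 * (1 - c) ^ k ≤ k * s ^ 2 * (s * (k : ℝ) ^ (1 + α))⁻¹ := by gcongr
    _ = s / (k : ℝ) ^ α := by
      rw [rpow_add hk, rpow_one]
      field_simp

lemma rpow_le_two_mul_rpow {x y α : ℝ} (hx : 0 ≤ x) (hxy : x ≤ 2 * y) (hα0 : 0 ≤ α)
    (hα1 : α ≤ 1) : x ^ α ≤ 2 * y ^ α := by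
  have hy : 0 ≤ y := by linarith
  calc x ^ α ≤ (2 * y) ^ α := rpow_le_rpow hx hxy hα0
    _ = 2 ^ α * y ^ α := mul_rpow zero_le_two hy
    _ ≤ 2 * y ^ α := by
      gcongr
      exact rpow_le_self_of_one_le one_le_two hα1

lemma div_rpow_le_two_mul_div_rpow {s x y α : ℝ} (hs : 0 ≤ s) (hx : 0 < x) (hxy : x ≤ 2 * y)
    (hα0 : 0 ≤ α) (hα1 : α ≤ 1) : s / y ^ α ≤ 2 * s / x ^ α := by
  have hy : 0 < y := by linarith
  have := rpow_le_two_mul_rpow hx.le hxy hα0 hα1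
  rw [div_le_div_iff₀ (by positivity) (by positivity)]
  nlinarith

lemma sq_two_mul_div_rpow_mul_inv_le {s x α : ℝ} (hs : 0 < s) (hx : 1 ≤ x) (hα0 : 0 ≤ α)
    (hα1 : α ≤ 1) : (2 * s / x ^ α) ^ 2 * (s / (x + 1) ^ α)⁻¹ ≤ 8 * s / x ^ α := by
  have hxα : 0 < x ^ α := rpow_pos_of_pos (by linarith) α
  have h := rpow_le_two_mul_rpow (by linarith) (by linarith) hα0 hα1 (x := x + 1) (y := x)
  rw [inv_div]
  calc (2 * s / x ^ α) ^ 2 * ((x + 1) ^ α / s) ≤ (2 * s / x ^ α) ^ 2 * (2 * x ^ α / s) := by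
        gcongr
    _ = 8 * s / x ^ α := by field_simp; ring

lemma sum_range_pow_sub_le {q : ℝ} (hq0 : 0 ≤ q) (hq1 : q < 1) (n : ℕ) :
    ∑ r ∈ range n, q ^ (n - r) ≤ (1 - q)⁻¹ := by
  calc ∑ r ∈ range n, q ^ (n - r) = ∑ j ∈ Ico 1 (n + 1), q ^ j := by
        rw [range_eq_Ico, sum_Ico_reflect _ _ le_self_add, Nat.add_sub_cancel_left, Nat.sub_zero]
    _ ≤ q ^ 1 / (1 - q) := geom_sum_Ico_le_of_lt_one hq0 hq1
    _ ≤ (1 - q)⁻¹ := by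
      rw [pow_one, div_eq_mul_inv]
      exact mul_le_of_le_one_left (inv_nonneg.2 (by linarith)) hq1.le

lemma sum_sq_mul_pow_two_mul_le {a : ℕ → ℝ} {q A B : ℝ} {k : ℕ} (hq0 : 0 ≤ q) (hq1 : q < 1)
    (ha : ∀ r, 0 ≤ a r) (hA : ∀ r < k / 2, a r ≤ A) (hB : ∀ r < k, k / 2 ≤ r → a r ≤ B) :
    ∑ r ∈ range k, a r ^ 2 * q ^ (2 * (k - r)) ≤ k * A ^ 2 * q ^ k + B ^ 2 * (1 - q)⁻¹ := by
  rw [range_eq_Ico, ← sum_Ico_consecutive _ (Nat.zero_le (k / 2)) (k.div_le_self 2)]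
  gcongr ?_ + ?_
  · calc ∑ r ∈ Ico 0 (k / 2), a r ^ 2 * q ^ (2 * (k - r))
        ≤ ∑ _r ∈ Ico 0 (k / 2), A ^ 2 * q ^ k := by
          refine sum_le_sum fun r hr => ?_
          have hr := (mem_Ico.1 hr).2
          have hpow : q ^ (2 * (k - r)) ≤ q ^ k := pow_le_pow_of_le_one hq0 hq1.le (by omega)
          gcongr
          · exact ha r
          · exact hA r hr
      _ = (k / 2 : ℕ) * (A ^ 2 * q ^ k) := by simp
      _ ≤ k * A ^ 2 * q ^ k := by
          rw [mul_assoc]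
          gcongr
          exact_mod_cast k.div_le_self 2
  · calc ∑ r ∈ Ico (k / 2) k, a r ^ 2 * q ^ (2 * (k - r))
        ≤ ∑ r ∈ Ico (k / 2) k, B ^ 2 * q ^ (k - r) := by
          refine sum_le_sum fun r hr => ?_
          obtain ⟨hkr, hrk⟩ := mem_Ico.1 hr
          have hpow : q ^ (2 * (k - r)) ≤ q ^ (k - r) := pow_le_pow_of_le_one hq0 hq1.le (by omega)
          gcongr
          · exact ha r
          · exact hB r hrk hkr
      _ ≤ ∑ r ∈ range k, B ^ 2 * q ^ (k - r) :=
          sum_le_sum_of_subset_of_nonneg (fun r hr => mem_range.2 (mem_Ico.1 hr).2)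
            fun _ _ _ => mul_nonneg (sq_nonneg B) (pow_nonneg hq0 _)
      _ = B ^ 2 * ∑ r ∈ range k, q ^ (k - r) := by rw [mul_sum]
      _ ≤ B ^ 2 * (1 - q)⁻¹ := by gcongr; exact sum_range_pow_sub_le hq0 hq1 k

lemma prod_Ico_one_sub_div_rpow_sq_le {s α : ℝ} (hs0 : 0 ≤ s) (hs1 : s < 1) (hα : 0 ≤ α)
    (r k : ℕ) :
    ∏ t ∈ Ico r k, (1 - s / ((t : ℝ) + 2) ^ α) ^ 2
      ≤ (1 - s / ((k : ℝ) + 1) ^ α) ^ (2 * (k - r)) := by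
  calc ∏ t ∈ Ico r k, (1 - s / ((t : ℝ) + 2) ^ α) ^ 2
      ≤ ∏ _t ∈ Ico r k, (1 - s / ((k : ℝ) + 1) ^ α) ^ 2 := by
        refine prod_le_prod (fun _ _ => sq_nonneg _) fun t ht => ?_
        have htk : (t : ℝ) + 1 ≤ k := by exact_mod_cast (mem_Ico.1 ht).2
        have hle_s : s / ((t : ℝ) + 2) ^ α ≤ s := div_le_self hs0 (one_le_rpow (by linarith) hα)
        have hge : s / ((k : ℝ) + 1) ^ α ≤ s / ((t : ℝ) + 2) ^ α :=
          div_le_div_of_nonneg_left hs0 (by positivity) (rpow_le_rpow (by positivity) (by linarith) hα)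
        exact pow_le_pow_left₀ (by linarith) (by linarith) 2
    _ = (1 - s / ((k : ℝ) + 1) ^ α) ^ (2 * (k - r)) := by
        rw [prod_const, Nat.card_Ico, ← pow_mul]

theorem variance_sum_bound (α₂ s : ℝ) (hα : α₂ ∈ Set.Ioo (0:ℝ) 1)
    (hs : s ∈ Set.Ioo (0:ℝ) 1) (k : ℕ) (hk : 1 ≤ k)
    (hcond : (Real.log s + (1 + α₂) * Real.log k) / s ≤ (k : ℝ) / ((k : ℝ) + 1) ^ α₂) :
    ∑ r ∈ Finset.range k, (s / ((r : ℝ) + 1) ^ α₂) ^ 2 *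
        ∏ t ∈ Finset.Ico r k, (1 - s / ((t : ℝ) + 2) ^ α₂) ^ 2
      ≤ 9 * s / (k : ℝ) ^ α₂ := by
  obtain ⟨hα0, hα1⟩ := hα
  obtain ⟨hs0, hs1⟩ := hs
  have hk1 : (1 : ℝ) ≤ k := by exact_mod_cast hk
  have hk0 : (0 : ℝ) < k := by linarith
  set K := (k : ℝ) ^ α₂
  set c := s / ((k : ℝ) + 1) ^ α₂
  have hc0 : 0 < c := by positivity
  have hc1 : c < 1 := (div_le_self hs0.le (one_le_rpow (by linarith) hα0.le)).trans_lt hs1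
  have hlog : log s + (1 + α₂) * log k ≤ k * c := by
    rw [div_le_iff₀ hs0] at hcond
    linarith [show k / ((k : ℝ) + 1) ^ α₂ * s = k * c by ring]
  have hsplit := sum_sq_mul_pow_two_mul_le (a := fun r : ℕ => s / ((r : ℝ) + 1) ^ α₂)
    (A := s) (B := 2 * s / K) (k := k) (sub_nonneg.2 hc1.le) (by linarith) (fun r => by positivity)
    (fun r _ => div_le_self hs0.le (one_le_rpow (by linarith) hα0.le)) fun r _ hr =>
      div_rpow_le_two_mul_div_rpow hs0.le hk0 (by exact_mod_cast (by omega : k ≤ 2 * (r + 1)))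
        hα0.le hα1.le
  calc _ ≤ ∑ r ∈ range k, (s / ((r : ℝ) + 1) ^ α₂) ^ 2 * (1 - c) ^ (2 * (k - r)) :=
        sum_le_sum fun r _ => mul_le_mul_of_nonneg_left
          (prod_Ico_one_sub_div_rpow_sq_le hs0.le hs1 hα0.le r k) (sq_nonneg _)
    _ ≤ k * s ^ 2 * (1 - c) ^ k + (2 * s / K) ^ 2 * (1 - (1 - c))⁻¹ := hsplit
    _ ≤ s / K + 8 * s / K :=
        add_le_add (natCast_mul_sq_mul_one_sub_pow_le hs0 hk0 hc1.le hlog)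
          (by rw [sub_sub_cancel]; exact sq_two_mul_div_rpow_mul_inv_le hs0 hk1 hα0.le hα1.le)
    _ = 9 * s / K := by ring
end

section
/- Let (s₁ˡ) be nonnegative reals and (s₂ᵗ) ∈ (0,1). Then ∑_{r=0}^{k−1} s₂ʳ (∑_{l=r}^{k−1} s₁ˡ) ∏_{t=r}^{k−1} (1 − s₂^{t+1}) + (∑_{l=0}^{k−1} s₁ˡ) ∏_{t=0}^{k} (1 − s₂ᵗ) = ∑_{l=0}^{k−1} s₁ˡ ∏_{t=l}^{k−1} (1 − s₂^{t+1}). -/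
/-!
Exchanging the order of summation, the left-hand side becomes
`∑ₗ s₁ l * (∑_{r ≤ l} s₂ r ∏_{t=r}^{k-1} (1 - s₂ (t+1)) + ∏_{t=0}^{k} (1 - s₂ t))`,
and the bracket equals `∏_{t=l}^{k-1} (1 - s₂ (t+1))` by induction on `l`: for `l = 0`
it is `(s₂ 0 + (1 - s₂ 0))` times that product, and raising `l` by one adds
`s₂ (l+1) ∏_{t=l+1}^{k-1} (1 - s₂ (t+1))`, which completes the leading factor
`1 - s₂ (l+1)` of the product to `1`.
-/

open Finset

theorem sum_range_mul_sum_Ico_comm {R : Type*} [NonUnitalNonAssocSemiring R] (g a : ℕ → R)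
    (k : ℕ) :
    ∑ r ∈ range k, g r * ∑ l ∈ Ico r k, a l = ∑ l ∈ range k, (∑ r ∈ range (l + 1), g r) * a l := by
  simp only [mul_sum, sum_mul, range_eq_Ico]
  exact sum_Ico_Ico_comm 0 k fun r l => g r * a l

theorem sum_range_mul_prod_Ico_add_prod_range {R : Type*} [CommRing R] (s : ℕ → R)
    {l k : ℕ} (hlk : l ≤ k) :
    ∑ r ∈ range (l + 1), s r * ∏ t ∈ Ico r k, (1 - s (t + 1)) + ∏ t ∈ range (k + 1), (1 - s t)
      = ∏ t ∈ Ico l k, (1 - s (t + 1)) := by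
  induction l with
  | zero =>
    rw [sum_range_one, prod_range_succ', range_eq_Ico]
    ring
  | succ l ih =>
    have hpeel := prod_eq_prod_Ico_succ_bot hlk fun t => 1 - s (t + 1)
    rw [sum_range_succ, add_right_comm, ih (by omega), hpeel]
    ring

theorem bias_reordering_identity_general (s₁ s₂ : ℕ → ℝ) (k : ℕ) :
    (∑ r ∈ Finset.range k, s₂ r * (∑ l ∈ Finset.Ico r k, s₁ l) *
        ∏ t ∈ Finset.Ico r k, (1 - s₂ (t+1)))
      + (∑ l ∈ Finset.range k, s₁ l) * ∏ t ∈ Finset.range (k+1), (1 - s₂ t)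
    = ∑ l ∈ Finset.range k, s₁ l * ∏ t ∈ Finset.Ico l k, (1 - s₂ (t+1)) := by
  have hswap : ∑ r ∈ range k, s₂ r * (∑ l ∈ Ico r k, s₁ l) * ∏ t ∈ Ico r k, (1 - s₂ (t + 1))
      = ∑ l ∈ range k, (∑ r ∈ range (l + 1), s₂ r * ∏ t ∈ Ico r k, (1 - s₂ (t + 1))) * s₁ l := by
    rw [← sum_range_mul_sum_Ico_comm]
    exact sum_congr rfl fun r _ => by ring
  rw [hswap, sum_mul, ← sum_add_distrib]
  refine sum_congr rfl fun l hl => ?_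
  rw [← sum_range_mul_prod_Ico_add_prod_range s₂ (mem_range.mp hl).le]
  ring

theorem bias_reordering_identity (s₁ s₂ : ℕ → ℝ) (h₁ : ∀ l, 0 ≤ s₁ l)
    (h₂ : ∀ t, s₂ t ∈ Set.Ioo (0:ℝ) 1) (k : ℕ) :
    (∑ r ∈ Finset.range k, s₂ r * (∑ l ∈ Finset.Ico r k, s₁ l) *
        ∏ t ∈ Finset.Ico r k, (1 - s₂ (t+1)))
      + (∑ l ∈ Finset.range k, s₁ l) * ∏ t ∈ Finset.range (k+1), (1 - s₂ t)
    = ∑ l ∈ Finset.range k, s₁ l * ∏ t ∈ Finset.Ico l k, (1 - s₂ (t+1)) :=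
  bias_reordering_identity_general s₁ s₂ k
end

section
/- Suppose a sequence of nonnegative reals (aᵏ) satisfies a^{k+1} ≤ (1 − 2/(k+1)) aᵏ + c/(k+1)^{4/3} for all k ≥ 0, where c ≥ 0. Then for all K ≥ 1, a^K ≤ Γ^K · c · ∑_{k=0}^{K−1} (k+1)^{2/3} ≤ c/K^{1/3}, where Γ^K = 2/(K(K+1)). -/
/-!
The paper's argument divides the recursion by `Γ^{k+1}` and telescopes. Equivalently: the sequence
`b k = Γᵏ c ∑_{i<k} (i+1)^p`, with `Γᵏ = 2/(k(k+1))` and `p = 2/3`, satisfies the recursion with the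
inequality reversed, so a comparison induction started at `k = 1` gives `aᵏ ≤ bᵏ`. The rate then
follows from the crude bound `∑_{i<K} (i+1)^p ≤ K · K^p`.
-/

open Finset

theorem le_of_recurrence_le {a b α β : ℕ → ℝ} {m : ℕ} (hα : ∀ k, m ≤ k → 0 ≤ α k)
    (ha : ∀ k, m ≤ k → a (k + 1) ≤ α k * a k + β k)
    (hb : ∀ k, m ≤ k → α k * b k + β k ≤ b (k + 1)) (hm : a m ≤ b m) :
    ∀ K, m ≤ K → a K ≤ b K := by
  intro K hK
  induction K, hK using Nat.le_induction with
  | base => exact hm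
  | succ k hk ih =>
    calc a (k + 1) ≤ α k * a k + β k := ha k hk
      _ ≤ α k * b k + β k := by gcongr; exact hα k hk
      _ ≤ b (k + 1) := hb k hk

noncomputable def recursionBound (c p : ℝ) (k : ℕ) : ℝ :=
  2 / ((k : ℝ) * ((k : ℝ) + 1)) * c * ∑ i ∈ range k, ((i : ℝ) + 1) ^ p

lemma one_sub_two_div_mul_two_div_le {x : ℝ} (hx : 0 < x) :
    (1 - 2 / (x + 1)) * (2 / (x * (x + 1))) ≤ 2 / ((x + 1) * (x + 1 + 1)) := by
  have hlhs : (1 - 2 / (x + 1)) * (2 / (x * (x + 1))) = 2 * (x - 1) / (x * (x + 1) ^ 2) := by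
    field_simp
    ring
  rw [hlhs, div_le_div_iff₀ (by positivity) (by positivity)]
  nlinarith

lemma div_rpow_two_sub_le {x c : ℝ} (hx : 1 ≤ x) (hc : 0 ≤ c) (p : ℝ) :
    c / x ^ (2 - p) ≤ 2 / (x * (x + 1)) * c * x ^ p := by
  have hx0 : 0 < x := by linarith
  rw [Real.rpow_sub hx0, Real.rpow_two, div_div_eq_mul_div,
    div_le_iff₀ (by positivity)]
  calc c * x ^ p = 2 / (x * (x + 1)) * c * x ^ p * (x * (x + 1) / 2) := by
        field_simp
    _ ≤ 2 / (x * (x + 1)) * c * x ^ p * x ^ 2 := by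
        gcongr
        nlinarith

lemma recursionBound_succ_ge {c : ℝ} (hc : 0 ≤ c) (p : ℝ) {k : ℕ} (hk : 1 ≤ k) :
    (1 - 2 / ((k : ℝ) + 1)) * recursionBound c p k + c / ((k : ℝ) + 1) ^ (2 - p)
      ≤ recursionBound c p (k + 1) := by
  have hk0 : (0 : ℝ) < k := by exact_mod_cast hk
  have hS : 0 ≤ c * ∑ i ∈ range k, ((i : ℝ) + 1) ^ p :=
    mul_nonneg hc (sum_nonneg fun i _ => by positivity)
  have hcoef := mul_le_mul_of_nonneg_right (one_sub_two_div_mul_two_div_le hk0) hS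
  have hforce := div_rpow_two_sub_le (by linarith : (1 : ℝ) ≤ k + 1) hc p
  simp only [recursionBound, sum_range_succ, Nat.cast_add, Nat.cast_one]
  linarith

lemma le_recursionBound {a : ℕ → ℝ} (ha : ∀ k, 0 ≤ a k) {c : ℝ} (hc : 0 ≤ c) (p : ℝ)
    (hrec : ∀ k : ℕ, a (k + 1) ≤ (1 - 2 / ((k : ℝ) + 1)) * a k + c / ((k : ℝ) + 1) ^ (2 - p))
    {K : ℕ} (hK : 1 ≤ K) : a K ≤ recursionBound c p K := by
  refine le_of_recurrence_le (fun k hk => ?_) (fun k _ => hrec k)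
    (fun k hk => recursionBound_succ_ge hc p hk) ?_ K hK
  · have hk1 : (1 : ℝ) ≤ k := by exact_mod_cast hk
    rw [sub_nonneg, div_le_one (by positivity)]
    linarith
  · have h0 := hrec 0
    norm_num [recursionBound] at h0 ⊢
    linarith [ha 0]

lemma recursionBound_le {c p : ℝ} (hc : 0 ≤ c) (hp : 0 ≤ p) {K : ℕ} (hK : 1 ≤ K) :
    recursionBound c p K ≤ 2 * c / (K : ℝ) ^ (1 - p) := by
  have hK0 : (0 : ℝ) < K := by exact_mod_cast hK
  have hsum : ∑ i ∈ range K, ((i : ℝ) + 1) ^ p ≤ K * (K : ℝ) ^ p := by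
    calc ∑ i ∈ range K, ((i : ℝ) + 1) ^ p ≤ ∑ _i ∈ range K, (K : ℝ) ^ p := by
          gcongr with i hi
          exact_mod_cast mem_range.mp hi
      _ = K * (K : ℝ) ^ p := by rw [sum_const, card_range, nsmul_eq_mul]
  calc recursionBound c p K ≤ 2 / ((K : ℝ) * ((K : ℝ) + 1)) * c * (K * (K : ℝ) ^ p) := by
        unfold recursionBound
        gcongr
    _ = 2 * c * (K : ℝ) ^ p / (K + 1) := by field_simp
    _ ≤ 2 * c * (K : ℝ) ^ p / K := by gcongr; linarith
    _ = 2 * c / (K : ℝ) ^ (1 - p) := by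
        rw [Real.rpow_sub hK0, Real.rpow_one]
        field_simp

theorem convex_recursion_rate (a : ℕ → ℝ) (ha : ∀ k, 0 ≤ a k) (c : ℝ) (hc : 0 ≤ c)
    (hrec : ∀ k : ℕ, a (k+1) ≤ (1 - 2 / ((k : ℝ) + 1)) * a k + c / ((k : ℝ) + 1) ^ ((4:ℝ)/3))
    (K : ℕ) (hK : 1 ≤ K) :
    a K ≤ (2 / ((K : ℝ) * ((K : ℝ) + 1))) * c *
        ∑ k ∈ Finset.range K, ((k : ℝ) + 1) ^ ((2:ℝ)/3) ∧
    (2 / ((K : ℝ) * ((K : ℝ) + 1))) * c *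
        ∑ k ∈ Finset.range K, ((k : ℝ) + 1) ^ ((2:ℝ)/3) ≤ 2 * c / (K : ℝ) ^ ((1:ℝ)/3) := by
  have h43 : (4 : ℝ) / 3 = 2 - 2 / 3 := by norm_num
  have h13 : (1 : ℝ) / 3 = 1 - 2 / 3 := by norm_num
  rw [h43] at hrec
  rw [h13]
  exact ⟨le_recursionBound ha hc _ hrec hK, recursionBound_le hc (by norm_num) hK⟩
end

section
/- Let F(·, ξ) : ℝⁿ → ℝ be L₀-Lipschitz for every ξ, let u ~ N(0, Iₙ), let β > 0, and define the single-sample gradient estimator g̃ = u (F(x + βu, ξ) − F(x, ξ))/β. Then E[‖g̃‖²] ≤ L₀² (n + 4)². -/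
open MeasureTheory

theorem gradient_estimator_second_moment {Ω : Type*} [MeasurableSpace Ω]
    (μ : Measure Ω) [IsProbabilityMeasure μ] {n : ℕ} {Ξ : Type*}
    (F : EuclideanSpace ℝ (Fin n) → Ξ → ℝ) (L₀ : ℝ) (hL : 0 ≤ L₀)
    (hF : ∀ (ξ : Ξ) (a b : EuclideanSpace ℝ (Fin n)), |F a ξ - F b ξ| ≤ L₀ * ‖a - b‖)
    (u : Ω → EuclideanSpace ℝ (Fin n)) (ξ : Ω → Ξ)
    (hu4 : Integrable (fun ω => ‖u ω‖^4) μ)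
    (hmom : ∫ ω, ‖u ω‖^4 ∂μ ≤ ((n : ℝ) + 4)^2)
    (x : EuclideanSpace ℝ (Fin n)) (β : ℝ) (hβ : 0 < β) :
    ∫ ω, ‖((F (x + β • u ω) (ξ ω) - F x (ξ ω)) / β) • u ω‖^2 ∂μ
      ≤ L₀^2 * ((n : ℝ) + 4)^2 := by
  have key : ∫ ω, ‖((F (x + β • u ω) (ξ ω) - F x (ξ ω)) / β) • u ω‖^2 ∂μ
      ≤ ∫ ω, L₀^2 * ‖u ω‖^4 ∂μ := by
    apply integral_mono_of_nonneg
    · filter_upwards with ω; positivity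
    · exact hu4.const_mul _
    · filter_upwards with ω
      have h1 : |F (x + β • u ω) (ξ ω) - F x (ξ ω)| ≤ L₀ * (β * ‖u ω‖) := by
        have := hF (ξ ω) (x + β • u ω) x
        simpa [norm_smul, abs_of_pos hβ] using this
      have h2 : ‖((F (x + β • u ω) (ξ ω) - F x (ξ ω)) / β) • u ω‖
          = |F (x + β • u ω) (ξ ω) - F x (ξ ω)| / β * ‖u ω‖ := by
        rw [norm_smul, Real.norm_eq_abs, abs_div, abs_of_pos hβ]
      have h3 : |F (x + β • u ω) (ξ ω) - F x (ξ ω)| / β ≤ L₀ * ‖u ω‖ := by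
        rw [div_le_iff₀ hβ]
        calc _ ≤ L₀ * (β * ‖u ω‖) := h1
        _ = L₀ * ‖u ω‖ * β := by ring
      calc ‖((F (x + β • u ω) (ξ ω) - F x (ξ ω)) / β) • u ω‖^2
          = (|F (x + β • u ω) (ξ ω) - F x (ξ ω)| / β * ‖u ω‖)^2 := by rw [h2]
        _ ≤ (L₀ * ‖u ω‖ * ‖u ω‖)^2 := by
            apply pow_le_pow_left₀ (by positivity)
            exact mul_le_mul_of_nonneg_right h3 (norm_nonneg _)
        _ = L₀^2 * ‖u ω‖^4 := by ring
  calc _ ≤ ∫ ω, L₀^2 * ‖u ω‖^4 ∂μ := key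
    _ = L₀^2 * ∫ ω, ‖u ω‖^4 ∂μ := integral_const_mul _ _
    _ ≤ L₀^2 * ((n : ℝ) + 4)^2 := by
        exact mul_le_mul_of_nonneg_left hmom (by positivity)
end

section
/- Let f : ℝⁿ → ℝ be differentiable with L₁-Lipschitz gradient, and suppose x^{k+1} = xᵏ − s·sign(mᵏ) coordinatewise with step s > 0 (so ‖x^{k+1} − xᵏ‖² = n s²). Then f(x^{k+1}) ≤ f(xᵏ) − s ‖∇f(xᵏ)‖₁ + (n L₁/2) s² + 2s ∑_{j=1}^n |∇_j f(xᵏ)| · 1{sign(m_jᵏ) ≠ sign(∇_j f(xᵏ))}. -/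
/-!
Along the segment from `x` to `y`, the slope of `f` exceeds `⟪g x, y - x⟫` by at most
`L t ‖y - x‖²`, which integrates to the descent lemma. For the sign step, the linear term
`⟪g x, y - x⟫ = -s ∑ⱼ gⱼ sign mⱼ` is `-s ‖g x‖₁` up to `2 s |gⱼ|` on every coordinate where the
signs disagree, and each coordinate of the step has modulus at most `s`, so `‖y - x‖² ≤ n s²`.
-/

open Finset

section Descent

variable {F : Type*} [NormedAddCommGroup F] [InnerProductSpace ℝ F] [CompleteSpace F]

theorem HasGradientAt.hasDerivAt_comp_add_smul {f : F → ℝ} {f' x v : F} {t : ℝ}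
    (hf : HasGradientAt f f' (x + t • v)) :
    HasDerivAt (fun t : ℝ => f (x + t • v)) (inner ℝ f' v) t := by
  have hline : HasDerivAt (fun t : ℝ => x + t • v) v t := by
    simpa using ((hasDerivAt_id t).smul_const v).const_add x
  simpa [Function.comp_def] using hf.hasFDerivAt.comp_hasDerivAt t hline

theorem le_add_inner_add_of_lipschitz_gradient {f : F → ℝ} {g : F → F} {L : ℝ}
    (hgrad : ∀ z, HasGradientAt f (g z) z) (hlip : ∀ a b, ‖g a - g b‖ ≤ L * ‖a - b‖)
    (x y : F) :
    f y ≤ f x + inner ℝ (g x) (y - x) + L / 2 * ‖y - x‖ ^ 2 := by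
  set v := y - x
  have hφ (t : ℝ) : HasDerivAt (fun t => f (x + t • v) - t * inner ℝ (g x) v)
      (inner ℝ (g (x + t • v)) v - inner ℝ (g x) v) t :=
    (hgrad _).hasDerivAt_comp_add_smul.sub (hasDerivAt_mul_const _)
  have hB (t : ℝ) : HasDerivAt (fun t => f x + L / 2 * t ^ 2 * ‖v‖ ^ 2) (L * t * ‖v‖ ^ 2) t :=
    (((hasDerivAt_pow 2 t).const_mul (L / 2)).mul_const (‖v‖ ^ 2)).const_add (f x)
      |>.congr_deriv (by push_cast; ring)
  have hslope : ∀ t ∈ Set.Ico (0 : ℝ) 1,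
      inner ℝ (g (x + t • v)) v - inner ℝ (g x) v ≤ L * t * ‖v‖ ^ 2 := by
    rintro t ⟨ht, -⟩
    calc inner ℝ (g (x + t • v)) v - inner ℝ (g x) v
        = inner ℝ (g (x + t • v) - g x) v := (inner_sub_left _ _ _).symm
      _ ≤ ‖g (x + t • v) - g x‖ * ‖v‖ := real_inner_le_norm _ _
      _ ≤ L * ‖t • v‖ * ‖v‖ := by
        gcongr
        simpa using hlip (x + t • v) x
      _ = L * t * ‖v‖ ^ 2 := by rw [norm_smul, Real.norm_of_nonneg ht]; ring
  have key := image_le_of_deriv_right_le_deriv_boundary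
    (fun t _ => (hφ t).continuousAt.continuousWithinAt)
    (fun t _ => (hφ t).hasDerivWithinAt) (by simp)
    (fun t _ => (hB t).continuousAt.continuousWithinAt)
    (fun t _ => (hB t).hasDerivWithinAt) hslope (Set.right_mem_Icc.2 zero_le_one)
  simp only [one_smul, one_mul, one_pow, mul_one, v, add_sub_cancel] at key
  linarith

end Descent

namespace Real

theorem abs_sub_two_mul_abs_ite_le_mul_sign (a b : ℝ) :
    |a| - 2 * |a| * (if sign b ≠ sign a then 1 else 0) ≤ a * sign b := by
  split_ifs with h
  · rcases sign_apply_eq b with hb | hb | hb <;> rw [hb] <;>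
      linarith [neg_abs_le a, le_abs_self a, abs_nonneg a]
  · rw [not_not.1 h, mul_zero, sub_zero]
    rcases lt_trichotomy a 0 with ha | rfl | ha
    · rw [sign_of_neg ha, abs_of_neg ha, mul_neg_one]
    · simp
    · rw [sign_of_pos ha, abs_of_pos ha, mul_one]

end Real

theorem EuclideanSpace.norm_sq_le_card_mul_of_abs_le {ι : Type*} [Fintype ι]
    {v : EuclideanSpace ℝ ι} {c : ℝ} (hv : ∀ i, |v i| ≤ c) :
    ‖v‖ ^ 2 ≤ Fintype.card ι * c ^ 2 := by
  rw [EuclideanSpace.real_norm_sq_eq, ← nsmul_eq_mul, ← card_univ]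
  exact sum_le_card_nsmul _ _ _ fun i _ => sq_le_sq' (abs_le.1 (hv i)).1 (abs_le.1 (hv i)).2

theorem sign_descent_lemma {n : ℕ} (f : EuclideanSpace ℝ (Fin n) → ℝ)
    (g : EuclideanSpace ℝ (Fin n) → EuclideanSpace ℝ (Fin n))
    (L₁ : ℝ) (hL : 0 ≤ L₁)
    (hgrad : ∀ z, HasGradientAt f (g z) z)
    (hlip : ∀ a b, ‖g a - g b‖ ≤ L₁ * ‖a - b‖)
    (x m y : EuclideanSpace ℝ (Fin n)) (s : ℝ) (hs : 0 < s)
    (hy : ∀ j, y j = x j - s * Real.sign (m j)) :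
    f y ≤ f x - s * (∑ j, |g x j|) + ((n : ℝ) * L₁ / 2) * s ^ 2
      + 2 * s * ∑ j, |g x j| *
          (if Real.sign (m j) ≠ Real.sign (g x j) then (1:ℝ) else 0) := by
  have hstep (j : Fin n) : (y - x) j = -(s * Real.sign (m j)) := by simp [hy j]
  have hinner : inner ℝ (g x) (y - x) = -(s * ∑ j, g x j * Real.sign (m j)) := by
    simp only [PiLp.inner_apply, hstep, mul_sum, RCLike.inner_apply, conj_trivial]
    rw [← sum_neg_distrib]
    congr! 1 with j
    ring
  have hsign : ∑ j, |g x j| - 2 * ∑ j, |g x j| *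
      (if Real.sign (m j) ≠ Real.sign (g x j) then (1:ℝ) else 0)
      ≤ ∑ j, g x j * Real.sign (m j) := by
    rw [mul_sum, ← sum_sub_distrib]
    exact sum_le_sum fun j _ => by
      simpa only [mul_assoc] using Real.abs_sub_two_mul_abs_ite_le_mul_sign (g x j) (m j)
  have hnorm : ‖y - x‖ ^ 2 ≤ n * s ^ 2 := by
    simpa using EuclideanSpace.norm_sq_le_card_mul_of_abs_le (v := y - x) (c := s) fun j => by
      rcases Real.sign_apply_eq (m j) with h | h | h <;> simp [hstep, h, abs_of_pos hs, hs.le]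
  have hdescent := le_add_inner_add_of_lipschitz_gradient hgrad hlip x y
  linarith [mul_le_mul_of_nonneg_left hnorm hL, mul_le_mul_of_nonneg_left hsign hs.le]
end
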